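/- For X, Y ∈ L^∞(P) on a nonatomic probability space, X second-order stochastically dominates Y if and only if AVaR_t(X) ≤ AVaR_t(Y) for all t ∈ [0,1], where AVaR_t(X) = (1/t)∫₀ᵗ VaR_s(X) ds for t ∈ (0,1] and AVaR₀(X) = VaR₀(X). -/

import Mathlib

open MeasureTheory ProbabilityTheory Filter Set

/-- `X` belongs to `L^∞(P)`: measurable and essentially bounded. -/
def MemLinf {Ω : Type*} [MeasurableSpace Ω] (P : Measure Ω) (X : Ω → ℝ) : Prop :=
  Measurable X ∧ ∃ C : ℝ, ∀ᵐ ω ∂P, |X ω| ≤ C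

/-- The upper quantile function `q_X(t) = inf {x : F_X(x) > t}` of `X` under `P`. -/
noncomputable def uq {Ω : Type*} [MeasurableSpace Ω] (P : Measure Ω)
    (X : Ω → ℝ) (t : ℝ) : ℝ :=
  sInf {x : ℝ | t < cdf (P.map X) x}

/-- `VaR_t(X) = −q_X(t)`. -/
noncomputable def VaR {Ω : Type*} [MeasurableSpace Ω] (P : Measure Ω)
    (X : Ω → ℝ) (t : ℝ) : ℝ :=
  - uq P X t

/-- `AVaR_t(X) = (1/t) ∫₀ᵗ VaR_s(X) ds` for `t ∈ (0,1]`, and `AVaR₀(X) = VaR₀(X)`. -/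
noncomputable def AVaR {Ω : Type*} [MeasurableSpace Ω] (P : Measure Ω)
    (X : Ω → ℝ) (t : ℝ) : ℝ :=
  if t = 0 then VaR P X 0 else (1 / t) * ∫ s in Ioc (0 : ℝ) t, VaR P X s

/-- `X` second-order stochastically dominates `Y`: `E[f(X)] ≥ E[f(Y)]` for every
increasing concave `f : ℝ → ℝ`. -/
def SSD {Ω : Type*} [MeasurableSpace Ω] (P : Measure Ω) (X Y : Ω → ℝ) : Prop :=
  ∀ f : ℝ → ℝ, Monotone f → ConcaveOn ℝ Set.univ f →
    ∫ ω, f (Y ω) ∂P ≤ ∫ ω, f (X ω) ∂P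

/-!
Both sides depend only on the laws of `X` and `Y`, and a law `μ` on `ℝ` is the image of the
uniform distribution on `(0, 1)` under its upper quantile function `q_μ`, so
`∫ f dμ = ∫₀¹ f (q_μ s) ds`. Testing second-order dominance against `x ↦ min x (q_Y t)` gives
`∫₀ᵗ q_Y ≤ ∫₀ᵗ q_X`, which is the AVaR inequality (at `t = 0` after letting `t ↓ 0`). Conversely,
a concave increasing `f` lies below its tangent lines,
`f (q_Y) ≤ f (q_X) - f'₊(q_X) (q_X - q_Y)`, and `∫₀¹ f'₊(q_X) (q_X - q_Y) ≥ 0` because the weight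
`f'₊ ∘ q_X` is nonnegative and decreasing while every partial integral `∫₀ᵗ (q_X - q_Y)` is
nonnegative.
-/

namespace ConcaveOn

variable {f : ℝ → ℝ}

lemma differentiableWithinAt_Ioi (hf : ConcaveOn ℝ univ f) (x : ℝ) :
    DifferentiableWithinAt ℝ f (Ioi x) x := by
  simpa using (hf.neg.differentiableWithinAt_Ioi_of_mem_interior (x := x) (by simp)).neg

lemma antitone_rightDeriv (hf : ConcaveOn ℝ univ f) :
    Antitone fun x => derivWithin f (Ioi x) x := fun x y hxy => by
  simpa [derivWithin.neg] using hf.neg.monotoneOn_rightDeriv (by simp) (by simp) hxy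

lemma le_add_rightDeriv_mul (hf : ConcaveOn ℝ univ f) (x y : ℝ) :
    f y ≤ f x + derivWithin f (Ioi x) x * (y - x) := by
  rcases lt_trichotomy x y with hxy | rfl | hyx
  · have := hf.slope_le_rightDeriv (mem_univ x) (mem_univ y) hxy
      (hf.differentiableWithinAt_Ioi x)
    rw [slope_def_field, div_le_iff₀ (sub_pos.2 hxy)] at this
    linarith
  · simp
  · have hslope : derivWithin f (Ioi x) x ≤ slope f y x := by
      have hd := (hf.differentiableWithinAt_Ioi x).hasDerivWithinAt
      rw [hasDerivWithinAt_iff_tendsto_slope' self_notMem_Ioi] at hd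
      refine le_of_tendsto hd ?_
      filter_upwards [self_mem_nhdsWithin] with z (hz : x < z)
      simpa only [slope_def_field] using hf.slope_anti_adjacent (mem_univ y) (mem_univ z) hyx hz
    rw [slope_def_field, le_div_iff₀ (sub_pos.2 hyx)] at hslope
    linarith

end ConcaveOn

lemma Monotone.integrable_of_ae_mem_Icc {μ : Measure ℝ} [IsFiniteMeasure μ] {f : ℝ → ℝ}
    {a b : ℝ} (hf : Monotone f) (hμ : ∀ᵐ x ∂μ, x ∈ Icc a b) : Integrable f μ := by
  rw [← Measure.restrict_eq_self_of_ae_mem hμ]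
  exact (hf.monotoneOn _).integrableOn_isCompact isCompact_Icc

lemma IntervalIntegrable.min_const {q : ℝ → ℝ} {a b : ℝ} (hq : IntervalIntegrable q volume a b)
    (c : ℝ) : IntervalIntegrable (fun s => min (q s) c) volume a b :=
  ⟨hq.1.inf (integrableOn_const (by simp)), hq.2.inf (integrableOn_const (by simp))⟩

lemma IntervalIntegrable.integral_eq_add {f : ℝ → ℝ} {a b t : ℝ}
    (hf : IntervalIntegrable f volume a b) (ht : t ∈ uIcc a b) :
    ∫ s in a..b, f s = (∫ s in a..t, f s) + ∫ s in t..b, f s :=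
  (intervalIntegral.integral_add_adjacent_intervals (hf.mono_set (uIcc_subset_uIcc_left ht))
    (hf.mono_set (uIcc_subset_uIcc_right ht))).symm

lemma intervalIntegral_min_le {q : ℝ → ℝ} (hq : IntervalIntegrable q volume 0 1) {t : ℝ}
    (ht : t ∈ Icc (0 : ℝ) 1) (c : ℝ) :
    ∫ s in 0..1, min (q s) c ≤ (∫ s in 0..t, q s) + (1 - t) * c := by
  have ht' : t ∈ uIcc (0 : ℝ) 1 := Icc_subset_uIcc ht
  rw [(hq.min_const c).integral_eq_add ht', ← smul_eq_mul, ← intervalIntegral.integral_const]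
  gcongr ?_ + ?_
  · exact intervalIntegral.integral_mono_on ht.1
      ((hq.min_const c).mono_set (uIcc_subset_uIcc_left ht'))
      (hq.mono_set (uIcc_subset_uIcc_left ht')) fun s _ => min_le_left _ _
  · exact intervalIntegral.integral_mono_on ht.2
      ((hq.min_const c).mono_set (uIcc_subset_uIcc_right ht'))
      intervalIntegrable_const fun s _ => min_le_right _ _

lemma intervalIntegral_min_eq_of_monotoneOn {q : ℝ → ℝ} (hq : IntervalIntegrable q volume 0 1)
    (hq_mono : MonotoneOn q (Ioo 0 1)) {t : ℝ} (ht : t ∈ Ioo (0 : ℝ) 1) :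
    ∫ s in 0..1, min (q s) (q t) = (∫ s in 0..t, q s) + (1 - t) * q t := by
  rw [(hq.min_const (q t)).integral_eq_add (Icc_subset_uIcc (Ioo_subset_Icc_self ht)),
    ← smul_eq_mul, ← intervalIntegral.integral_const]
  congr 1
  · refine intervalIntegral.integral_congr_Ioo_of_le ht.1.le fun s hs => min_eq_left ?_
    exact hq_mono ⟨hs.1, hs.2.trans ht.2⟩ ht hs.2.le
  · refine intervalIntegral.integral_congr_Ioo_of_le ht.2.le fun s hs => min_eq_right ?_
    exact hq_mono ht ⟨ht.1.trans hs.1, hs.2⟩ hs.1.le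

lemma setIntegral_nonneg_of_lowerSegment {h : ℝ → ℝ} {S : Set ℝ} (hS : S ⊆ Ioo 0 1)
    (hS_lower : ∀ s ∈ S, ∀ r ∈ Ioc 0 s, r ∈ S) (hh : ∀ t ∈ Ioc 0 1, 0 ≤ ∫ s in 0..t, h s) :
    0 ≤ ∫ s in S, h s := by
  rcases S.eq_empty_or_nonempty with rfl | hne
  · simp
  have hbdd : BddAbove S := ⟨1, fun s hs => (hS hs).2.le⟩
  obtain ⟨s₀, hs₀⟩ := hne
  set T := sSup S
  have hT0 : 0 < T := (hS hs₀).1.trans_le (le_csSup hbdd hs₀)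
  have hT1 : T ≤ 1 := csSup_le ⟨s₀, hs₀⟩ fun s hs => (hS hs).2.le
  have hST : S =ᵐ[volume] Ioc 0 T := by
    have hsub : S ⊆ Ioc 0 T := fun s hs => ⟨(hS hs).1, le_csSup hbdd hs⟩
    have hsup : Ioo 0 T ⊆ S := fun r hr => by
      obtain ⟨s, hs, hrs⟩ := exists_lt_of_lt_csSup ⟨s₀, hs₀⟩ hr.2
      exact hS_lower s hs r ⟨hr.1, hrs.le⟩
    exact hsub.eventuallyLE.antisymm (Ioo_ae_eq_Ioc.symm.le.trans hsup.eventuallyLE)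
  rw [setIntegral_congr_set hST, ← intervalIntegral.integral_of_le hT0.le]
  exact hh T ⟨hT0, hT1⟩

/-- Layer-cake argument: writing `g s = ∫₀^M 1{u < g s} du` and
swapping the integrals, `∫₀¹ g h` becomes an average over `u` of integrals of `h` over the sets
`{s | u < g s}`, which are initial segments of `(0, 1)` because `g` decreases. -/
lemma intervalIntegral_mul_nonneg_of_antitoneOn {g h : ℝ → ℝ} {M : ℝ} (hg : Measurable g)
    (hg_anti : AntitoneOn g (Ioo 0 1)) (hg_mem : ∀ s ∈ Ioo 0 1, g s ∈ Icc 0 M)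
    (hh : IntervalIntegrable h volume 0 1) (hH : ∀ t ∈ Ioc 0 1, 0 ≤ ∫ s in 0..t, h s) :
    0 ≤ ∫ s in 0..1, g s * h s := by
  rw [intervalIntegral.integral_of_le zero_le_one, integral_Ioc_eq_integral_Ioo]
  rw [intervalIntegrable_iff_integrableOn_Ioo_of_le zero_le_one] at hh
  set F : ℝ → ℝ → ℝ := fun s u => (Iio (g s)).indicator (fun _ => h s) u
  have hF : Integrable (Function.uncurry F)
      ((volume.restrict (Ioo 0 1)).prod (volume.restrict (Ioo 0 M))) :=
    (hh.comp_fst _).indicator (measurableSet_lt measurable_snd (hg.comp measurable_fst))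
  have h_inner_u : ∀ s ∈ Ioo (0 : ℝ) 1, ∫ u in Ioo 0 M, F s u = g s * h s := fun s hs => by
    rw [setIntegral_indicator measurableSet_Iio, Ioo_inter_Iio, min_eq_right (hg_mem s hs).2,
      setIntegral_const, measureReal_def, Real.volume_Ioo, sub_zero,
      ENNReal.toReal_ofReal (hg_mem s hs).1, smul_eq_mul]
  have h_inner_s : ∀ u, 0 ≤ ∫ s in Ioo 0 1, F s u := fun u => by
    have : ∫ s in Ioo 0 1, F s u = ∫ s in Ioo 0 1 ∩ {s | u < g s}, h s := by
      rw [← setIntegral_indicator (measurableSet_lt measurable_const hg)]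
      rfl
    rw [this]
    exact setIntegral_nonneg_of_lowerSegment inter_subset_left
      (fun s hs r hr => ⟨⟨hr.1, hr.2.trans_lt hs.1.2⟩, hs.2.trans_le
        (hg_anti ⟨hr.1, hr.2.trans_lt hs.1.2⟩ hs.1 hr.2)⟩) hH
  calc (0 : ℝ) ≤ ∫ u in Ioo 0 M, ∫ s in Ioo 0 1, F s u := integral_nonneg h_inner_s
    _ = ∫ s in Ioo 0 1, ∫ u in Ioo 0 M, F s u := (integral_integral_swap hF).symm
    _ = ∫ s in Ioo 0 1, g s * h s := setIntegral_congr_fun measurableSet_Ioo h_inner_u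

namespace ProbabilityTheory

/-- Only the values on `(0, 1)` are meaningful: the set is empty for `t ≥ 1` and unbounded below
for `t < 0`, so `sInf` returns the junk value `0` there. -/
noncomputable def upperQuantile (μ : Measure ℝ) (t : ℝ) : ℝ :=
  sInf {x | t < cdf μ x}

lemma uq_eq_upperQuantile {Ω : Type*} [MeasurableSpace Ω] (P : Measure Ω) (X : Ω → ℝ) :
    uq P X = upperQuantile (P.map X) :=
  rfl

section

variable {μ : Measure ℝ} {s t x a b c : ℝ}

lemma bddBelow_setOf_lt_cdf (h : cdf μ a ≤ t) : BddBelow {x | t < cdf μ x} :=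
  ⟨a, fun _ hx => ((monotone_cdf μ).reflect_lt (h.trans_lt hx)).le⟩

lemma exists_cdf_le (ht : 0 < t) : ∃ a, cdf μ a ≤ t :=
  ((tendsto_cdf_atBot μ).eventually (eventually_le_nhds ht)).exists

lemma nonempty_setOf_lt_cdf (ht : t < 1) : {x | t < cdf μ x}.Nonempty :=
  ((tendsto_cdf_atTop μ).eventually (eventually_gt_nhds ht)).exists

lemma upperQuantile_le_of_lt_cdf (ht : 0 < t) (hx : t < cdf μ x) : upperQuantile μ t ≤ x :=
  have ⟨_, ha⟩ := exists_cdf_le (μ := μ) ht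
  csInf_le (bddBelow_setOf_lt_cdf ha) hx

lemma le_cdf_of_upperQuantile_le (ht : t ∈ Ioo 0 1) (hx : upperQuantile μ t ≤ x) :
    t ≤ cdf μ x := by
  by_contra! hlt
  rw [← (cdf μ).iInf_Ioi_eq x] at hlt
  obtain ⟨⟨y, hxy⟩, hy⟩ := exists_lt_of_ciInf_lt hlt
  obtain ⟨a, ha⟩ := exists_cdf_le (μ := μ) ht.1
  obtain ⟨z, hz, hzy⟩ := (csInf_lt_iff (bddBelow_setOf_lt_cdf ha) (nonempty_setOf_lt_cdf ht.2)).1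
    (hx.trans_lt hxy)
  exact (hz.trans_le (monotone_cdf μ hzy.le)).not_gt hy

lemma upperQuantile_mono (hs : BddBelow {x | s < cdf μ x}) (ht : t < 1) (hst : s ≤ t) :
    upperQuantile μ s ≤ upperQuantile μ t :=
  csInf_le_csInf hs (nonempty_setOf_lt_cdf ht) fun _ hx => hst.trans_lt hx

lemma monotoneOn_upperQuantile : MonotoneOn (upperQuantile μ) (Ioo 0 1) := fun _ hs _ ht hst =>
  have ⟨_, ha⟩ := exists_cdf_le (μ := μ) hs.1
  upperQuantile_mono (bddBelow_setOf_lt_cdf ha) ht.2 hst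

lemma le_upperQuantile_zero (h : ∀ t ∈ Ioo 0 1, c ≤ upperQuantile μ t) :
    c ≤ upperQuantile μ 0 := by
  refine le_csInf (nonempty_setOf_lt_cdf one_pos) fun x (hx : 0 < cdf μ x) => ?_
  obtain ⟨t, ht, htx⟩ := exists_between (lt_min hx one_pos)
  exact (h t ⟨ht, htx.trans_le (min_le_right _ _)⟩).trans
    (upperQuantile_le_of_lt_cdf ht (htx.trans_le (min_le_left _ _)))

lemma upperQuantile_of_neg (ht : t < 0) : upperQuantile μ t = 0 := by
  have : {x | t < cdf μ x} = univ := eq_univ_of_forall fun x => ht.trans_le (cdf_nonneg μ x)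
  rw [upperQuantile, this, Real.sInf_of_not_bddBelow not_bddBelow_univ]

lemma upperQuantile_of_one_le (ht : 1 ≤ t) : upperQuantile μ t = 0 := by
  have : {x | t < cdf μ x} = ∅ := eq_empty_of_forall_notMem fun x hx =>
    (cdf_le_one μ x).not_gt (ht.trans_lt hx)
  rw [upperQuantile, this, Real.sInf_empty]

lemma measurable_upperQuantile : Measurable (upperQuantile μ) := by
  refine measurable_of_restrict_of_restrict_compl (measurableSet_Ioo (a := 0) (b := 1)) ?_ ?_
  · exact Monotone.measurable fun s t hst => monotoneOn_upperQuantile s.2 t.2 hst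
  · have : (Ioo 0 1)ᶜ.domRestrict (upperQuantile μ) =
        fun t => ({0} : Set ℝ).indicator (fun _ => upperQuantile μ 0) t.1 := by
      refine domRestrict_eq_iff.2 fun t ht => ?_
      rcases lt_trichotomy t 0 with h | rfl | h
      · simp [upperQuantile_of_neg h, h.ne]
      · simp
      · have : 1 ≤ t := by simpa [h] using ht
        simp [upperQuantile_of_one_le this, h.ne']
    rw [this]
    exact (measurable_const.indicator (measurableSet_singleton 0)).comp measurable_subtype_coe

variable [IsProbabilityMeasure μ]

lemma cdf_eq_zero_of_lt (hμ : ∀ᵐ y ∂μ, a ≤ y) (hx : x < a) : cdf μ x = 0 := by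
  rw [cdf_eq_real, measureReal_def, measure_eq_zero_iff_ae_notMem.2, ENNReal.toReal_zero]
  filter_upwards [hμ] with y hy using not_le.2 (hx.trans_le hy)

lemma cdf_eq_one_of_le (hμ : ∀ᵐ y ∂μ, y ≤ b) (hx : b ≤ x) : cdf μ x = 1 := by
  rw [cdf_eq_real, measureReal_def, (prob_compl_eq_zero_iff measurableSet_Iic).1,
    ENNReal.toReal_one]
  rw [measure_eq_zero_iff_ae_notMem]
  filter_upwards [hμ] with y hy using fun hxy => hxy (hy.trans hx)

lemma upperQuantile_mem_Icc (hμ : ∀ᵐ y ∂μ, y ∈ Icc a b) (ht : t ∈ Ioo 0 1) :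
    upperQuantile μ t ∈ Icc a b := by
  refine ⟨le_of_forall_lt fun x hx => lt_of_not_ge fun hle => ?_, ?_⟩
  · have := le_cdf_of_upperQuantile_le ht hle
    rw [cdf_eq_zero_of_lt (hμ.mono fun _ hy => hy.1) hx] at this
    exact this.not_gt ht.1
  · refine upperQuantile_le_of_lt_cdf ht.1 ?_
    rw [cdf_eq_one_of_le (hμ.mono fun _ hy => hy.2) le_rfl]
    exact ht.2

lemma upperQuantile_zero_le (hμ : ∀ᵐ y ∂μ, a ≤ y) (ht : t ∈ Ioo 0 1) :
    upperQuantile μ 0 ≤ upperQuantile μ t :=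
  upperQuantile_mono (bddBelow_setOf_lt_cdf (cdf_eq_zero_of_lt hμ (sub_one_lt a)).le)
    ht.2 ht.1.le

lemma map_upperQuantile : (volume.restrict (Ioo 0 1)).map (upperQuantile μ) = μ := by
  refine Measure.ext_of_Iic _ _ fun x => ?_
  rw [Measure.map_apply measurable_upperQuantile measurableSet_Iic,
    Measure.restrict_apply (measurable_upperQuantile measurableSet_Iic), ← ofReal_cdf]
  refine le_antisymm ?_ ?_
  · calc volume (upperQuantile μ ⁻¹' Iic x ∩ Ioo 0 1) ≤ volume (Ioc 0 (cdf μ x)) :=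
          measure_mono fun t ht => ⟨ht.2.1, le_cdf_of_upperQuantile_le ht.2 ht.1⟩
      _ = ENNReal.ofReal (cdf μ x) := by rw [Real.volume_Ioc, sub_zero]
  · calc ENNReal.ofReal (cdf μ x) = volume (Ioo 0 (cdf μ x)) := by
          rw [Real.volume_Ioo, sub_zero]
      _ ≤ volume (upperQuantile μ ⁻¹' Iic x ∩ Ioo 0 1) := measure_mono fun t ht =>
          ⟨upperQuantile_le_of_lt_cdf ht.1 ht.2, ht.1, ht.2.trans_le (cdf_le_one μ x)⟩

lemma integral_eq_intervalIntegral_upperQuantile {f : ℝ → ℝ} (hf : AEStronglyMeasurable f μ) :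
    ∫ x, f x ∂μ = ∫ t in 0..1, f (upperQuantile μ t) := by
  rw [← map_upperQuantile (μ := μ)] at hf
  rw [intervalIntegral.integral_of_le zero_le_one, integral_Ioc_eq_integral_Ioo,
    ← integral_map measurable_upperQuantile.aemeasurable hf, map_upperQuantile]

lemma intervalIntegrable_comp_upperQuantile {f : ℝ → ℝ} (hf : Integrable f μ) :
    IntervalIntegrable (fun t => f (upperQuantile μ t)) volume 0 1 := by
  rw [intervalIntegrable_iff_integrableOn_Ioo_of_le zero_le_one]
  rw [← map_upperQuantile (μ := μ)] at hf
  exact (integrable_map_measure hf.1 measurable_upperQuantile.aemeasurable).1 hf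

end

section

variable {μ ν : Measure ℝ} [IsProbabilityMeasure μ] [IsProbabilityMeasure ν] {a b a' b' : ℝ}

lemma intervalIntegrable_upperQuantile (hμ : ∀ᵐ x ∂μ, x ∈ Icc a b) :
    IntervalIntegrable (upperQuantile μ) volume 0 1 :=
  intervalIntegrable_comp_upperQuantile (f := id) (monotone_id.integrable_of_ae_mem_Icc hμ)

lemma intervalIntegral_upperQuantile_le_of_concave (hμ : ∀ᵐ x ∂μ, x ∈ Icc a b)
    (hν : ∀ᵐ x ∂ν, x ∈ Icc a' b')
    (h : ∀ f : ℝ → ℝ, Monotone f → ConcaveOn ℝ univ f → ∫ x, f x ∂ν ≤ ∫ x, f x ∂μ)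
    {t : ℝ} (ht : t ∈ Ioc (0 : ℝ) 1) :
    ∫ s in 0..t, upperQuantile ν s ≤ ∫ s in 0..t, upperQuantile μ s := by
  have hrep : ∀ {ρ : Measure ℝ} [IsProbabilityMeasure ρ] {f : ℝ → ℝ}, Monotone f →
      ∫ x, f x ∂ρ = ∫ s in 0..1, f (upperQuantile ρ s) := fun hf =>
    integral_eq_intervalIntegral_upperQuantile hf.measurable.aestronglyMeasurable
  rcases ht.2.eq_or_lt with rfl | ht1
  -- `upperQuantile ν 1` is a junk value, so `t = 1` is tested against `id` instead
  · have h1 := h id monotone_id (concaveOn_id convex_univ)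
    rwa [hrep (f := id) monotone_id, hrep (f := id) monotone_id] at h1
  set c := upperQuantile ν t
  have hc := h (fun x => min x c) (monotone_id.min monotone_const)
    ((concaveOn_id convex_univ).inf (concaveOn_const c convex_univ))
  rw [hrep (f := fun x => min x c) (monotone_id.min monotone_const),
    hrep (f := fun x => min x c) (monotone_id.min monotone_const)] at hc
  have hν_eq := intervalIntegral_min_eq_of_monotoneOn (intervalIntegrable_upperQuantile hν)
    monotoneOn_upperQuantile ⟨ht.1, ht1⟩
  have hμ_le := intervalIntegral_min_le (intervalIntegrable_upperQuantile hμ)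
    (Ioc_subset_Icc_self ht) c
  linarith

lemma upperQuantile_zero_le_of_intervalIntegral_le (hμ : ∀ᵐ x ∂μ, x ∈ Icc a b)
    (hν : ∀ᵐ x ∂ν, x ∈ Icc a' b')
    (h : ∀ t ∈ Ioc (0 : ℝ) 1, ∫ s in 0..t, upperQuantile ν s ≤ ∫ s in 0..t, upperQuantile μ s) :
    upperQuantile ν 0 ≤ upperQuantile μ 0 := by
  refine le_upperQuantile_zero fun t ht => le_of_mul_le_mul_left ?_ ht.1
  have hsub : uIcc 0 t ⊆ uIcc (0 : ℝ) 1 :=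
    uIcc_subset_uIcc_left (Icc_subset_uIcc (Ioo_subset_Icc_self ht))
  calc t * upperQuantile ν 0 = ∫ _ in 0..t, upperQuantile ν 0 := by simp
    _ ≤ ∫ s in 0..t, upperQuantile ν s :=
      intervalIntegral.integral_mono_on_of_le_Ioo ht.1.le intervalIntegrable_const
        ((intervalIntegrable_upperQuantile hν).mono_set hsub)
        fun s hs => upperQuantile_zero_le (hν.mono fun _ hx => hx.1) ⟨hs.1, hs.2.trans ht.2⟩
    _ ≤ ∫ s in 0..t, upperQuantile μ s := h t (Ioo_subset_Ioc_self ht)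
    _ ≤ ∫ _ in 0..t, upperQuantile μ t :=
      intervalIntegral.integral_mono_on_of_le_Ioo ht.1.le
        ((intervalIntegrable_upperQuantile hμ).mono_set hsub) intervalIntegrable_const
        fun s hs => monotoneOn_upperQuantile ⟨hs.1, hs.2.trans ht.2⟩ ht hs.2.le
    _ = t * upperQuantile μ t := by simp

lemma integral_concave_le_of_intervalIntegral_upperQuantile_le (hμ : ∀ᵐ x ∂μ, x ∈ Icc a b)
    (hν : ∀ᵐ x ∂ν, x ∈ Icc a' b')
    (h : ∀ t ∈ Ioc (0 : ℝ) 1, ∫ s in 0..t, upperQuantile ν s ≤ ∫ s in 0..t, upperQuantile μ s)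
    {f : ℝ → ℝ} (hf_mono : Monotone f) (hf_conc : ConcaveOn ℝ univ f) :
    ∫ x, f x ∂ν ≤ ∫ x, f x ∂μ := by
  rw [integral_eq_intervalIntegral_upperQuantile hf_mono.measurable.aestronglyMeasurable,
    integral_eq_intervalIntegral_upperQuantile hf_mono.measurable.aestronglyMeasurable]
  set f' : ℝ → ℝ := fun x => derivWithin f (Ioi x) x
  set g : ℝ → ℝ := fun s => f' (upperQuantile μ s)
  set d : ℝ → ℝ := fun s => upperQuantile μ s - upperQuantile ν s
  have hd : IntervalIntegrable d volume 0 1 :=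
    (intervalIntegrable_upperQuantile hμ).sub (intervalIntegrable_upperQuantile hν)
  have hg_meas : Measurable g :=
    hf_conc.antitone_rightDeriv.measurable.comp measurable_upperQuantile
  have hg_mem : ∀ s ∈ Ioo (0 : ℝ) 1, g s ∈ Icc 0 (f' a) := fun s hs =>
    ⟨(hf_mono.monotoneOn _).derivWithin_nonneg,
      hf_conc.antitone_rightDeriv (upperQuantile_mem_Icc hμ hs).1⟩
  have hgd : 0 ≤ ∫ s in 0..1, g s * d s := by
    refine intervalIntegral_mul_nonneg_of_antitoneOn hg_meas
      (fun s hs r hr hsr => hf_conc.antitone_rightDeriv (monotoneOn_upperQuantile hs hr hsr))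
      hg_mem hd fun t ht => ?_
    have hsub : uIcc 0 t ⊆ uIcc (0 : ℝ) 1 :=
      uIcc_subset_uIcc_left (Icc_subset_uIcc (Ioc_subset_Icc_self ht))
    rw [intervalIntegral.integral_sub ((intervalIntegrable_upperQuantile hμ).mono_set hsub)
      ((intervalIntegrable_upperQuantile hν).mono_set hsub), sub_nonneg]
    exact h t ht
  have hgd_int : IntervalIntegrable (fun s => g s * d s) volume 0 1 := by
    rw [intervalIntegrable_iff_integrableOn_Ioo_of_le zero_le_one] at hd ⊢
    refine hd.bdd_mul (c := f' a) hg_meas.aestronglyMeasurable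
      ((ae_restrict_mem measurableSet_Ioo).mono fun s hs => ?_)
    rw [Real.norm_of_nonneg (hg_mem s hs).1]
    exact (hg_mem s hs).2
  have hf_int : IntervalIntegrable (fun s => f (upperQuantile μ s)) volume 0 1 :=
    intervalIntegrable_comp_upperQuantile (hf_mono.integrable_of_ae_mem_Icc hμ)
  calc ∫ s in 0..1, f (upperQuantile ν s) ≤ ∫ s in 0..1, (f (upperQuantile μ s) - g s * d s) :=
        intervalIntegral.integral_mono_on zero_le_one
          (intervalIntegrable_comp_upperQuantile (hf_mono.integrable_of_ae_mem_Icc hν))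
          (hf_int.sub hgd_int) fun s _ => by
            have := hf_conc.le_add_rightDeriv_mul (upperQuantile μ s) (upperQuantile ν s)
            simp only [g, d, f']
            linarith
    _ = (∫ s in 0..1, f (upperQuantile μ s)) - ∫ s in 0..1, g s * d s :=
        intervalIntegral.integral_sub hf_int hgd_int
    _ ≤ ∫ s in 0..1, f (upperQuantile μ s) := sub_le_self _ hgd

theorem forall_integral_concave_le_iff (hμ : ∀ᵐ x ∂μ, x ∈ Icc a b) (hν : ∀ᵐ x ∂ν, x ∈ Icc a' b') :
    (∀ f : ℝ → ℝ, Monotone f → ConcaveOn ℝ univ f → ∫ x, f x ∂ν ≤ ∫ x, f x ∂μ) ↔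
      ∀ t ∈ Ioc (0 : ℝ) 1, ∫ s in 0..t, upperQuantile ν s ≤ ∫ s in 0..t, upperQuantile μ s :=
  ⟨fun h _ ht => intervalIntegral_upperQuantile_le_of_concave hμ hν h ht,
    fun h _ hf_mono hf_conc =>
      integral_concave_le_of_intervalIntegral_upperQuantile_le hμ hν h hf_mono hf_conc⟩

end

end ProbabilityTheory

lemma ae_mem_Icc_map_of_memLinf {Ω : Type*} [MeasurableSpace Ω] {P : Measure Ω} {X : Ω → ℝ}
    (hX : MemLinf P X) : ∃ C, ∀ᵐ x ∂P.map X, x ∈ Icc (-C) C :=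
  have ⟨hX_meas, C, hC⟩ := hX
  ⟨C, (ae_map_iff hX_meas.aemeasurable measurableSet_Icc).2 (hC.mono fun _ h => abs_le.1 h)⟩

lemma SSD_iff_integral_map {Ω : Type*} [MeasurableSpace Ω] {P : Measure Ω} {X Y : Ω → ℝ}
    (hX : Measurable X) (hY : Measurable Y) :
    SSD P X Y ↔ ∀ f : ℝ → ℝ, Monotone f → ConcaveOn ℝ univ f →
      ∫ x, f x ∂P.map Y ≤ ∫ x, f x ∂P.map X := by
  refine forall₃_congr fun f hf _ => ?_
  rw [integral_map hX.aemeasurable hf.measurable.aestronglyMeasurable,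
    integral_map hY.aemeasurable hf.measurable.aestronglyMeasurable]

lemma AVaR_le_AVaR_iff {Ω : Type*} [MeasurableSpace Ω] {P : Measure Ω} {X Y : Ω → ℝ} {t : ℝ}
    (ht : 0 < t) : AVaR P X t ≤ AVaR P Y t ↔
      ∫ s in 0..t, upperQuantile (P.map Y) s ≤ ∫ s in 0..t, upperQuantile (P.map X) s := by
  simp only [AVaR, ht.ne', if_false, VaR, uq_eq_upperQuantile,
    ← intervalIntegral.integral_of_le ht.le, intervalIntegral.integral_neg]
  rw [mul_le_mul_iff_right₀ (one_div_pos.2 ht), neg_le_neg_iff]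

lemma AVaR_zero {Ω : Type*} [MeasurableSpace Ω] (P : Measure Ω) (X : Ω → ℝ) :
    AVaR P X 0 = -upperQuantile (P.map X) 0 := by
  simp [AVaR, VaR, uq_eq_upperQuantile]

theorem stmt18_general {Ω : Type*} [MeasurableSpace Ω] (P : Measure Ω) [IsProbabilityMeasure P]
    (X Y : Ω → ℝ) (hX : MemLinf P X) (hY : MemLinf P Y) :
    SSD P X Y ↔ ∀ t ∈ Icc (0 : ℝ) 1, AVaR P X t ≤ AVaR P Y t := by
  obtain ⟨CX, hCX⟩ := ae_mem_Icc_map_of_memLinf hX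
  obtain ⟨CY, hCY⟩ := ae_mem_Icc_map_of_memLinf hY
  have := Measure.isProbabilityMeasure_map (μ := P) hX.1.aemeasurable
  have := Measure.isProbabilityMeasure_map (μ := P) hY.1.aemeasurable
  rw [SSD_iff_integral_map hX.1 hY.1, forall_integral_concave_le_iff hCX hCY]
  refine ⟨fun h t ht => ?_, fun h t ht => (AVaR_le_AVaR_iff ht.1).1 (h t (Ioc_subset_Icc_self ht))⟩
  rcases ht.1.eq_or_lt with rfl | ht0
  · rw [AVaR_zero, AVaR_zero, neg_le_neg_iff]
    exact upperQuantile_zero_le_of_intervalIntegral_le hCX hCY h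
  · exact (AVaR_le_AVaR_iff ht0).2 (h t ⟨ht0, ht.2⟩)

/-- On a nonatomic probability space, `X ⪰₂ Y` if and only if
`AVaR_t(X) ≤ AVaR_t(Y)` for all `t ∈ [0,1]`. -/
theorem stmt18 {Ω : Type*} [MeasurableSpace Ω] (P : Measure Ω) [IsProbabilityMeasure P]
    (U : Ω → ℝ) (hU : Measurable U)
    (hUd : P.map U = volume.restrict (Ioo (0 : ℝ) 1))
    (X Y : Ω → ℝ) (hX : MemLinf P X) (hY : MemLinf P Y) :
    SSD P X Y ↔ ∀ t ∈ Icc (0 : ℝ) 1, AVaR P X t ≤ AVaR P Y t :=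
  stmt18_general P X Y hX hY
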